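/- Let α ∈ (0,∞), δ ∈ (-1,∞) and x ∈ (0,∞). Then the series ∑_{k=0}^{∞} ((-δ)_k / k!) γ(α+k,x)/x^{α+k} converges, and its sum equals N(α,δ,x); that is, the partial sums ∑_{k=0}^{n-1} ((-δ)_k / k!) γ(α+k,x)/x^{α+k} tend to N(α,δ,x) as n → ∞. -/

import Mathlib

open MeasureTheory Real Filter

/-- The Pochhammer symbol `(a)_k = a (a+1) ⋯ (a+k-1)`, with `(a)_0 = 1`. -/
noncomputable def poch (a : ℝ) : ℕ → ℝ
  | 0 => 1
  | k + 1 => poch a k * (a + k)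

/-- The lower incomplete Gamma function `γ(ν,x) = ∫₀ˣ s^(ν-1) e^(-s) ds`. -/
noncomputable def lincGamma (ν x : ℝ) : ℝ := ∫ s in (0:ℝ)..x, s ^ (ν - 1) * Real.exp (-s)

/-- The reparametrized Kummer function `N(α,δ,x) = ∫₀¹ t^(α-1) (1-t)^δ e^(-xt) dt`. -/
noncomputable def NKummer (α δ x : ℝ) : ℝ :=
  ∫ t in (0:ℝ)..1, t ^ (α - 1) * (1 - t) ^ δ * Real.exp (-(x * t))

/-!
The substitution `s = x t` turns `γ(α+k,x)/x^(α+k)` into `∫₀¹ t^(α+k-1) e^(-xt) dt`, so the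
`n`-th partial sum is `∫₀¹ t^(α-1) Sₙ(t) e^(-xt) dt`, where `Sₙ` is the `n`-th partial sum of the
binomial series `∑ (-δ)ₖ/k! tᵏ = (1-t)^δ`. The factors `-δ + j` of `(-δ)ₖ` are nonnegative for
`j ≥ ⌈δ⌉`, so the terms of this series have one sign from `k = ⌈δ⌉` on, and its partial sums are
then bounded by its sum plus its first `⌈δ⌉` terms: `|Sₙ(t)| ≤ (1-t)^δ + C` uniformly in `n` and
`t ∈ [0,1)`. As `t^(α-1) ((1-t)^δ + C)` is integrable on `[0,1]`, dominated
convergence gives the limit `N(α,δ,x)`.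
-/

open Set

lemma poch_eq_ascPochhammer_eval (a : ℝ) (k : ℕ) : poch a k = (ascPochhammer ℝ k).eval a := by
  induction k with
  | zero => simp [poch]
  | succ k ih => rw [poch, ih, ascPochhammer_succ_eval]

lemma poch_neg_div_factorial (a : ℝ) (k : ℕ) :
    poch (-a) k / k.factorial = (-1) ^ k * Ring.choose a k := by
  rw [poch_eq_ascPochhammer_eval, ascPochhammer_eval_neg_eq_descPochhammer,
    descPochhammer_eval_eq_ascPochhammer, Ring.choose_eq_smul,
    Polynomial.descPochhammer_smeval_eq_ascPochhammer, Polynomial.ascPochhammer_smeval_cast,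
    Polynomial.ascPochhammer_smeval_eq_eval, smul_eq_mul]
  ring

lemma hasSum_poch_neg_div_factorial_mul_pow (a : ℝ) {t : ℝ} (ht : |t| < 1) :
    HasSum (fun k => poch (-a) k / k.factorial * t ^ k) ((1 - t) ^ a) := by
  have := Real.one_add_rpow_hasFPowerSeriesOnBall_zero (a := a) |>.hasSum
    (y := -t) (by simpa [enorm_eq_nnnorm, ← NNReal.coe_lt_coe] using ht)
  rw [zero_add, ← sub_eq_add_neg] at this
  refine this.congr_fun fun k => ?_
  rw [binomialSeries_apply, List.ofFn_const, List.prod_replicate, smul_eq_mul,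
    poch_neg_div_factorial, neg_pow]
  ring

lemma poch_add (a : ℝ) (m n : ℕ) : poch a (m + n) = poch a m * poch (a + m) n := by
  induction n with
  | zero => simp [poch]
  | succ n ih => rw [← add_assoc, poch, poch, ih]; push_cast; ring

lemma poch_nonneg {a : ℝ} (ha : 0 ≤ a) (k : ℕ) : 0 ≤ poch a k := by
  induction k with
  | zero => simp [poch]
  | succ k ih => exact mul_nonneg ih (by positivity)

lemma poch_nonneg_or_nonpos_of_nonneg_add {a : ℝ} {m : ℕ} (hm : 0 ≤ a + m) :
    (∀ k, m ≤ k → 0 ≤ poch a k) ∨ (∀ k, m ≤ k → poch a k ≤ 0) := by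
  have htail : ∀ k, m ≤ k → poch a k = poch a m * poch (a + m) (k - m) := fun k hk => by
    rw [← poch_add, Nat.add_sub_cancel' hk]
  rcases le_total 0 (poch a m) with hP | hP
  · exact .inl fun k hk => htail k hk ▸ mul_nonneg hP (poch_nonneg hm _)
  · exact .inr fun k hk => htail k hk ▸ mul_nonpos_of_nonpos_of_nonneg hP (poch_nonneg hm _)

lemma abs_sum_range_le_of_hasSum_of_nonneg {f : ℕ → ℝ} {s : ℝ} (hf : HasSum f s) {m : ℕ}
    (hpos : ∀ k, m ≤ k → 0 ≤ f k) (n : ℕ) :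
    |∑ k ∈ Finset.range n, f k| ≤ |s| + ∑ k ∈ Finset.range m, |f k| := by
  rcases le_total n m with hnm | hmn
  · calc |∑ k ∈ Finset.range n, f k| ≤ ∑ k ∈ Finset.range n, |f k| :=
          Finset.abs_sum_le_sum_abs _ _
      _ ≤ ∑ k ∈ Finset.range m, |f k| :=
          Finset.sum_le_sum_of_subset_of_nonneg (Finset.range_subset_range.2 hnm)
            fun _ _ _ => abs_nonneg _
      _ ≤ |s| + ∑ k ∈ Finset.range m, |f k| := le_add_of_nonneg_left (abs_nonneg _)
  · have hle : ∑ k ∈ Finset.range n, f k ≤ s :=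
      sum_le_hasSum _ (fun k hk => hpos k (hmn.trans (by simpa using hk))) hf
    have hge : ∑ k ∈ Finset.range m, f k ≤ ∑ k ∈ Finset.range n, f k :=
      Finset.sum_le_sum_of_subset_of_nonneg (Finset.range_subset_range.2 hmn)
        fun k _ hk => hpos k (by simpa using hk)
    calc |∑ k ∈ Finset.range n, f k| ≤ max |∑ k ∈ Finset.range m, f k| |s| :=
          abs_le_max_abs_abs hge hle
      _ ≤ |s| + ∑ k ∈ Finset.range m, |f k| :=
          max_le (le_add_of_nonneg_of_le (abs_nonneg _) (Finset.abs_sum_le_sum_abs _ _))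
            (le_add_of_nonneg_right (Finset.sum_nonneg fun _ _ => abs_nonneg _))

lemma abs_sum_range_le_of_hasSum {f : ℕ → ℝ} {s : ℝ} (hf : HasSum f s) {m : ℕ}
    (hsign : (∀ k, m ≤ k → 0 ≤ f k) ∨ (∀ k, m ≤ k → f k ≤ 0)) (n : ℕ) :
    |∑ k ∈ Finset.range n, f k| ≤ |s| + ∑ k ∈ Finset.range m, |f k| := by
  rcases hsign with hpos | hneg
  · exact abs_sum_range_le_of_hasSum_of_nonneg hf hpos n
  · simpa using abs_sum_range_le_of_hasSum_of_nonneg hf.neg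
      (fun k hk => neg_nonneg.2 (hneg k hk)) n

lemma exists_abs_sum_poch_neg_div_factorial_mul_pow_le (a : ℝ) :
    ∃ C, ∀ n : ℕ, ∀ t ∈ Ico (0 : ℝ) 1,
      |∑ k ∈ Finset.range n, poch (-a) k / k.factorial * t ^ k| ≤ (1 - t) ^ a + C := by
  set m := ⌈a⌉₊
  refine ⟨∑ k ∈ Finset.range m, |poch (-a) k| / k.factorial, fun n t ⟨ht0, ht1⟩ => ?_⟩
  have hsign := poch_nonneg_or_nonpos_of_nonneg_add (a := -a) (m := m)
    (by linarith [Nat.le_ceil a])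
  have hterm : ∀ k, poch (-a) k / k.factorial * t ^ k = poch (-a) k * (t ^ k / k.factorial) :=
    fun k => by ring
  have hf := hasSum_poch_neg_div_factorial_mul_pow a (abs_lt.2 ⟨by linarith, ht1⟩)
  refine (abs_sum_range_le_of_hasSum hf (m := m) ?_ n).trans ?_
  · simp only [hterm]
    exact hsign.imp (fun h k hk => mul_nonneg (h k hk) (by positivity))
      (fun h k hk => mul_nonpos_of_nonpos_of_nonneg (h k hk) (by positivity))
  · rw [abs_of_nonneg (Real.rpow_nonneg (by linarith) a)]
    gcongr with k
    rw [abs_mul, abs_div, Nat.abs_cast, abs_of_nonneg (pow_nonneg ht0 k)]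
    exact mul_le_of_le_one_right (by positivity) (pow_le_one₀ ht0 ht1.le)

lemma intervalIntegrable_rpow_mul_one_sub_rpow {a b : ℝ} (ha : -1 < a) (hb : -1 < b) :
    IntervalIntegrable (fun t : ℝ => t ^ a * (1 - t) ^ b) volume 0 1 := by
  have hbeta := (Complex.betaIntegral_convergent (u := a + 1) (v := b + 1)
    (by simp; linarith) (by simp; linarith)).norm
  refine hbeta.congr_uIoo fun t ht => ?_
  rw [uIoo_of_le zero_le_one] at ht
  have h1t : 0 < 1 - t := sub_pos.2 ht.2
  simp only [norm_mul]
  rw [← Complex.ofReal_one, ← Complex.ofReal_sub, Complex.norm_cpow_eq_rpow_re_of_pos ht.1,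
    Complex.norm_cpow_eq_rpow_re_of_pos h1t]
  simp

lemma lincGamma_div_rpow (ν : ℝ) {x : ℝ} (hx : 0 < x) :
    lincGamma ν x / x ^ ν = ∫ t in (0:ℝ)..1, t ^ (ν - 1) * Real.exp (-(x * t)) := by
  have hscale := intervalIntegral.integral_comp_mul_left
    (fun s : ℝ => s ^ (ν - 1) * Real.exp (-s)) hx.ne' (a := 0) (b := 1)
  rw [mul_zero, mul_one, ← lincGamma, smul_eq_mul] at hscale
  have hpow : ∀ t ∈ uIcc (0:ℝ) 1, (x * t) ^ (ν - 1) * Real.exp (-(x * t))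
      = x ^ (ν - 1) * (t ^ (ν - 1) * Real.exp (-(x * t))) := fun t ht => by
    rw [uIcc_of_le zero_le_one] at ht
    rw [Real.mul_rpow hx.le ht.1, mul_assoc]
  rw [intervalIntegral.integral_congr hpow, intervalIntegral.integral_const_mul,
    Real.rpow_sub_one hx.ne'] at hscale
  field_simp at hscale ⊢
  linarith

lemma sum_mul_lincGamma_div_rpow (c : ℕ → ℝ) {α x : ℝ} (hα : 0 < α) (hx : 0 < x) (n : ℕ) :
    ∑ k ∈ Finset.range n, c k * (lincGamma (α + k) x / x ^ (α + (k:ℝ)))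
      = ∫ t in (0:ℝ)..1,
          t ^ (α - 1) * (∑ k ∈ Finset.range n, c k * t ^ k) * Real.exp (-(x * t)) := by
  have hint (k : ℕ) : IntervalIntegrable
      (fun t => c k * (t ^ (α + k - 1) * Real.exp (-(x * t)))) volume 0 1 :=
    ((intervalIntegral.intervalIntegrable_rpow' (by linarith [k.cast_nonneg (α := ℝ)]))
      |>.mul_continuousOn (by fun_prop)).const_mul _
  simp_rw [lincGamma_div_rpow _ hx, ← intervalIntegral.integral_const_mul]
  rw [← intervalIntegral.integral_finsetSum fun k _ => hint k]
  refine intervalIntegral.integral_congr_uIoo fun t ht => ?_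
  rw [uIoo_of_le zero_le_one] at ht
  simp only [Finset.mul_sum, Finset.sum_mul]
  refine Finset.sum_congr rfl fun k _ => ?_
  rw [add_sub_right_comm, Real.rpow_add_natCast ht.1.ne']
  ring

lemma norm_rpow_mul_mul_exp_le {a x t S B : ℝ} (hx : 0 ≤ x) (ht : 0 ≤ t) (hS : |S| ≤ B) :
    ‖t ^ a * S * Real.exp (-(x * t))‖ ≤ t ^ a * B := by
  have hta : 0 ≤ t ^ a := Real.rpow_nonneg ht a
  rw [norm_mul, norm_mul, Real.norm_of_nonneg hta, Real.norm_of_nonneg (Real.exp_pos _).le]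
  calc t ^ a * |S| * Real.exp (-(x * t)) ≤ t ^ a * B * 1 :=
        mul_le_mul (mul_le_mul_of_nonneg_left hS hta) (Real.exp_le_one_iff.2 (by nlinarith))
          (Real.exp_pos _).le (mul_nonneg hta ((abs_nonneg S).trans hS))
    _ = t ^ a * B := mul_one _

theorem kummer_gamma_series_converges
    (α : ℝ) (hα : 0 < α) (δ : ℝ) (hδ : -1 < δ) (x : ℝ) (hx : 0 < x) :
    Filter.Tendsto
      (fun n : ℕ => ∑ k ∈ Finset.range n,
        poch (-δ) k / (k.factorial : ℝ) * (lincGamma (α + k) x / x ^ (α + (k:ℝ))))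
      Filter.atTop (nhds (NKummer α δ x)) := by
  simp_rw [sum_mul_lincGamma_div_rpow _ hα hx]
  obtain ⟨C, hC⟩ := exists_abs_sum_poch_neg_div_factorial_mul_pow_le δ
  have hIoo : ∀ᵐ t ∂volume, t ∈ uIoc (0:ℝ) 1 → t ∈ Ioo (0:ℝ) 1 :=
    (Measure.ae_ne volume 1).mono fun t ht1 ht => by
      rw [uIoc_of_le zero_le_one] at ht
      exact ⟨ht.1, ht.2.lt_of_ne ht1⟩
  refine intervalIntegral.tendsto_integral_filter_of_dominated_convergence
    (fun t => t ^ (α - 1) * ((1 - t) ^ δ + C)) (.of_forall fun n => by fun_prop)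
    (.of_forall fun n => hIoo.mono fun t ht hmem =>
      norm_rpow_mul_mul_exp_le hx.le (ht hmem).1.le (hC n t (Ioo_subset_Ico_self (ht hmem)))) ?_
    (hIoo.mono fun t ht hmem => ?_)
  · simp_rw [mul_add]
    exact (intervalIntegrable_rpow_mul_one_sub_rpow (by linarith) hδ).add
      ((intervalIntegral.intervalIntegrable_rpow' (by linarith)).mul_const C)
  · have ht1 : |t| < 1 := abs_lt.2 ⟨by linarith [(ht hmem).1], (ht hmem).2⟩
    exact (((hasSum_poch_neg_div_factorial_mul_pow δ ht1).tendsto_sum_nat).const_mul _).mul_const _
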